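/- Let A = [[M, F],[F^T, B]] be symmetric with F entrywise nonpositive and M an invertible copositive matrix with negative off-diagonal entries. Then A is SPN if and only if the Schur complement A/M = B − F^T M^{−1} F is SPN. -/

import Mathlib

open Matrix

def Copositive {ι : Type*} [Fintype ι] (A : Matrix ι ι ℝ) : Prop :=
  ∀ x : ι → ℝ, (∀ i, 0 ≤ x i) → 0 ≤ x ⬝ᵥ A.mulVec x

def SPN {ι : Type*} [Fintype ι] (A : Matrix ι ι ℝ) : Prop :=
  ∃ P N : Matrix ι ι ℝ, P.PosSemidef ∧ (∀ i j, 0 ≤ N i j) ∧ A = P + N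

def Mn {n : ℕ} (A : Matrix (Fin n) (Fin n) ℝ) : Prop :=
  ∀ i j k l : Fin n, i ≤ k → j ≤ l → i ≠ j → k ≠ l → A i j ≤ A k l

/-!
Copositivity and nonpositive off-diagonal entries make `M` positive semidefinite, because
`|x|ᵀ M |x| ≤ xᵀ M x`; being invertible it is positive definite. A positive definite Z-matrix is
monotone (`M x ≥ 0 → x ≥ 0`, tested against the negative part of `x`), so `M⁻¹ ≥ 0` entrywise.

If `A/M = Q + N`, then `[[M, F], [Fᵀ, FᵀM⁻¹F + Q]]` is positive semidefinite by the Schur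
complement criterion and lies entrywise below `A`. Conversely, let `P ≤ A` be positive
semidefinite with blocks `C, G, D`, so `C ≤ M` and `G ≤ F ≤ 0`. If `C` is invertible it is again a
positive definite Z-matrix, hence `0 ≤ M⁻¹ ≤ C⁻¹` and `FᵀM⁻¹F ≤ GᵀC⁻¹G`, so the positive
semidefinite Schur complement `D - GᵀC⁻¹G` lies below `A/M`. If `C` is singular, its strictly
negative off-diagonal entries force a positive null vector `y`; then `Gᵀ y = 0`, so `G = 0`, hence
`F = 0` and `A/M = B ≥ D`.
-/

namespace Matrix

variable {n : Type*} [Fintype n]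

def IsZMatrix (A : Matrix n n ℝ) : Prop :=
  ∀ i j, i ≠ j → A i j ≤ 0

lemma IsZMatrix.dotProduct_mulVec_abs_le {A : Matrix n n ℝ} (hA : A.IsZMatrix) (x : n → ℝ) :
    |x| ⬝ᵥ A *ᵥ |x| ≤ x ⬝ᵥ A *ᵥ x := by
  simp only [dotProduct, mulVec, Finset.mul_sum, Pi.abs_apply]
  refine Finset.sum_le_sum fun i _ => Finset.sum_le_sum fun j _ => ?_
  rcases eq_or_ne i j with rfl | hij
  · rw [mul_left_comm, abs_mul_abs_self, mul_left_comm]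
  · calc |x i| * (A i j * |x j|) = A i j * |x i * x j| := by rw [abs_mul]; ring
      _ ≤ A i j * (x i * x j) := mul_le_mul_of_nonpos_left (le_abs_self _) (hA i j hij)
      _ = x i * (A i j * x j) := by ring

lemma IsZMatrix.dotProduct_mulVec_nonpos {A : Matrix n n ℝ} (hA : A.IsZMatrix) {u v : n → ℝ}
    (hu : 0 ≤ u) (hv : 0 ≤ v) (huv : ∀ i, u i * v i = 0) : u ⬝ᵥ A *ᵥ v ≤ 0 := by
  simp only [dotProduct, mulVec, Finset.mul_sum]
  refine Finset.sum_nonpos fun i _ => Finset.sum_nonpos fun j _ => ?_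
  rcases eq_or_ne i j with rfl | hij
  · rw [mul_left_comm, huv i, mul_zero]
  · rw [mul_left_comm]
    exact mul_nonpos_of_nonpos_of_nonneg (hA i j hij) (mul_nonneg (hu i) (hv j))

lemma IsZMatrix.posSemidef_of_copositive {A : Matrix n n ℝ} (hZ : A.IsZMatrix)
    (hsymm : A.IsSymm) (hA : Copositive A) : A.PosSemidef := by
  have hherm : A.IsHermitian := by rwa [IsHermitian, conjTranspose_eq_transpose_of_trivial]
  refine .of_dotProduct_mulVec_nonneg hherm fun x => ?_
  simpa using (hA |x| fun i => abs_nonneg (x i)).trans (hZ.dotProduct_mulVec_abs_le x)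

lemma IsZMatrix.nonneg_of_mulVec_nonneg {A : Matrix n n ℝ} (hZ : A.IsZMatrix) (hA : A.PosDef)
    {x : n → ℝ} (hx : 0 ≤ A *ᵥ x) : 0 ≤ x := by
  have hdisj : ∀ i, x⁻ i * x⁺ i = 0 := fun i => by
    rcases le_total (x i) 0 with h | h <;> simp [h]
  have hmixed : x⁻ ⬝ᵥ A *ᵥ x⁺ ≤ 0 :=
    hZ.dotProduct_mulVec_nonpos (negPart_nonneg x) (posPart_nonneg x) hdisj
  have hx' : 0 ≤ x⁻ ⬝ᵥ A *ᵥ x := dotProduct_nonneg_of_nonneg (negPart_nonneg x) hx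
  have hsplit : x⁻ ⬝ᵥ A *ᵥ x = x⁻ ⬝ᵥ A *ᵥ x⁺ - x⁻ ⬝ᵥ A *ᵥ x⁻ := by
    rw [← dotProduct_sub, ← mulVec_sub, posPart_sub_negPart]
  have hquad : x⁻ ⬝ᵥ A *ᵥ x⁻ ≤ 0 := by linarith
  have hneg : x⁻ = 0 := by
    by_contra h
    simpa using (hA.dotProduct_mulVec_pos h).trans_le hquad
  exact negPart_eq_zero.1 hneg

lemma mul_apply_nonneg {l m o : Type*} [Fintype m] {X : Matrix l m ℝ} {Y : Matrix m o ℝ}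
    (hX : ∀ i j, 0 ≤ X i j) (hY : ∀ i j, 0 ≤ Y i j) (i : l) (j : o) : 0 ≤ (X * Y) i j :=
  Finset.sum_nonneg fun k _ => mul_nonneg (hX i k) (hY k j)

lemma transpose_mul_mul_apply_le {m : Type*} {F G : Matrix n m ℝ} {X Y : Matrix n n ℝ}
    (hGF : ∀ i j, G i j ≤ F i j) (hF : ∀ i j, F i j ≤ 0) (hX : ∀ i j, 0 ≤ X i j)
    (hXY : ∀ i j, X i j ≤ Y i j) (i j : m) : (Fᵀ * X * F) i j ≤ (Gᵀ * Y * G) i j := by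
  simp only [mul_apply, transpose_apply, Finset.sum_mul]
  refine Finset.sum_le_sum fun k _ => Finset.sum_le_sum fun l _ => ?_
  have hG : ∀ i j, G i j ≤ 0 := fun i j => (hGF i j).trans (hF i j)
  calc F l i * X l k * F k j = -F l i * X l k * -F k j := by ring
    _ ≤ -G l i * Y l k * -G k j := by
      refine mul_le_mul (mul_le_mul (neg_le_neg (hGF l i)) (hXY l k) (hX l k)
        (neg_nonneg.2 (hG l i))) (neg_le_neg (hGF k j)) (neg_nonneg.2 (hF k j))
        (mul_nonneg (neg_nonneg.2 (hG l i)) ((hX l k).trans (hXY l k)))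
    _ = G l i * Y l k * G k j := by ring

lemma PosSemidef.mulVec_abs_eq_zero {A : Matrix n n ℝ} (hA : A.PosSemidef) (hZ : A.IsZMatrix)
    {x : n → ℝ} (hx : A *ᵥ x = 0) : A *ᵥ |x| = 0 := by
  refine (hA.dotProduct_mulVec_zero_iff |x|).1 (le_antisymm ?_ (hA.dotProduct_mulVec_nonneg _))
  simpa [hx] using hZ.dotProduct_mulVec_abs_le x

lemma pos_of_mulVec_eq_zero {A : Matrix n n ℝ} (hoff : ∀ i j, i ≠ j → A i j < 0) {y : n → ℝ}
    (hy : 0 ≤ y) (hy0 : y ≠ 0) (hAy : A *ᵥ y = 0) (i : n) : 0 < y i := by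
  refine (hy i).lt_of_ne fun hyi => ?_
  replace hyi : y i = 0 := hyi.symm
  obtain ⟨j, hj⟩ : ∃ j, y j ≠ 0 := Function.ne_iff.1 hy0
  have hij : i ≠ j := fun h => hj (h ▸ hyi)
  have hneg : (A *ᵥ y) i < 0 := by
    refine Finset.sum_neg' (fun k _ => ?_) ⟨j, Finset.mem_univ j, ?_⟩
    · rcases eq_or_ne i k with rfl | hik
      · rw [hyi, mul_zero]
      · exact mul_nonpos_of_nonpos_of_nonneg (hoff i k hik).le (hy k)
    · exact mul_neg_of_neg_of_pos (hoff i j hij) ((hy j).lt_of_ne' hj)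
  simp [hAy] at hneg

lemma PosSemidef.transpose_mulVec_eq_zero_of_fromBlocks {m : Type*} [Fintype m]
    {C : Matrix n n ℝ} {G : Matrix n m ℝ} {D : Matrix m m ℝ}
    (hX : (fromBlocks C G Gᵀ D).PosSemidef) {y : n → ℝ} (hCy : C *ᵥ y = 0) : Gᵀ *ᵥ y = 0 := by
  set z : n ⊕ m → ℝ := Sum.elim y 0
  have hXz : fromBlocks C G Gᵀ D *ᵥ z = Sum.elim (0 : n → ℝ) (Gᵀ *ᵥ y) := by
    simp [z, fromBlocks_mulVec, hCy]
  have hquad : star z ⬝ᵥ fromBlocks C G Gᵀ D *ᵥ z = 0 := by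
    simp [hXz, z]
  ext j
  simpa [hXz] using congrFun ((hX.dotProduct_mulVec_zero_iff z).1 hquad) (Sum.inr j)

lemma eq_zero_of_transpose_mulVec_eq_zero {m : Type*} {G : Matrix n m ℝ} (hG : ∀ i j, G i j ≤ 0)
    {y : n → ℝ} (hy : ∀ i, 0 < y i) (hGy : Gᵀ *ᵥ y = 0) : G = 0 := by
  ext i j
  have hterms : ∀ k ∈ Finset.univ, G k j * y k ≤ 0 := fun k _ =>
    mul_nonpos_of_nonpos_of_nonneg (hG k j) (hy k).le
  have hsum : ∑ k, G k j * y k = 0 := by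
    simpa [mulVec, dotProduct, mul_comm] using congrFun hGy j
  have hi := (Finset.sum_eq_zero_iff_of_nonpos hterms).1 hsum i (Finset.mem_univ i)
  simpa [(hy i).ne'] using hi

variable [DecidableEq n]

lemma IsZMatrix.inv_apply_nonneg {A : Matrix n n ℝ} (hZ : A.IsZMatrix) (hA : A.PosDef)
    (i j : n) : 0 ≤ A⁻¹ i j := by
  have hcol : A *ᵥ (A⁻¹ *ᵥ Pi.single j 1) = Pi.single j 1 := by
    rw [mulVec_mulVec, mul_nonsing_inv A ((isUnit_iff_isUnit_det A).1 hA.isUnit), one_mulVec]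
  have hi := hZ.nonneg_of_mulVec_nonneg hA (hcol ▸ Pi.single_nonneg.2 zero_le_one) i
  rwa [mulVec_single_one] at hi

lemma inv_apply_le_inv_apply_of_le {C M : Matrix n n ℝ} (hC : IsUnit C.det) (hM : IsUnit M.det)
    (hCinv : ∀ i j, 0 ≤ C⁻¹ i j) (hMinv : ∀ i j, 0 ≤ M⁻¹ i j) (hCM : ∀ i j, C i j ≤ M i j)
    (i j : n) : M⁻¹ i j ≤ C⁻¹ i j := by
  have hdiff : C⁻¹ - M⁻¹ = C⁻¹ * (M - C) * M⁻¹ := by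
    rw [Matrix.mul_sub, Matrix.sub_mul, Matrix.mul_assoc, mul_nonsing_inv M hM, Matrix.mul_one,
      nonsing_inv_mul C hC, Matrix.one_mul]
  have hprod := mul_apply_nonneg
    (mul_apply_nonneg (Y := M - C) hCinv fun i j => sub_nonneg.2 (hCM i j)) hMinv i j
  rw [← hdiff, sub_apply] at hprod
  linarith

lemma PosSemidef.exists_pos_mulVec_eq_zero {A : Matrix n n ℝ} (hA : A.PosSemidef)
    (hoff : ∀ i j, i ≠ j → A i j < 0) (hdet : A.det = 0) :
    ∃ y : n → ℝ, (∀ i, 0 < y i) ∧ A *ᵥ y = 0 := by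
  obtain ⟨x, hx0, hx⟩ := exists_mulVec_eq_zero_iff.2 hdet
  have hZ : A.IsZMatrix := fun i j h => (hoff i j h).le
  have habs := hA.mulVec_abs_eq_zero hZ hx
  have habs0 : |x| ≠ 0 := fun h => hx0 (funext fun i => abs_eq_zero.1 (congrFun h i))
  exact ⟨|x|, pos_of_mulVec_eq_zero hoff (abs_nonneg x) habs0 habs, habs⟩

end Matrix

section SPN

variable {ι κ : Type*} [Fintype ι] [Fintype κ]

lemma SPN.of_posSemidef_le {A P : Matrix ι ι ℝ} (hP : P.PosSemidef)
    (hPA : ∀ i j, P i j ≤ A i j) : SPN A :=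
  ⟨P, A - P, hP, fun i j => sub_nonneg.2 (hPA i j), by abel⟩

lemma SPN.exists_posSemidef_fromBlocks_le {M : Matrix ι ι ℝ} {F : Matrix ι κ ℝ}
    {F' : Matrix κ ι ℝ} {B : Matrix κ κ ℝ} (h : SPN (fromBlocks M F F' B)) :
    ∃ (C : Matrix ι ι ℝ) (G : Matrix ι κ ℝ) (D : Matrix κ κ ℝ),
      (fromBlocks C G Gᵀ D).PosSemidef ∧ (∀ i j, C i j ≤ M i j) ∧
        (∀ i j, G i j ≤ F i j) ∧ ∀ i j, D i j ≤ B i j := by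
  obtain ⟨P, N, hP, hN, hPN⟩ := h
  have hle : ∀ a b, P a b ≤ fromBlocks M F F' B a b := fun a b => by
    rw [hPN, Matrix.add_apply]; linarith [hN a b]
  rw [← fromBlocks_toBlocks P] at hP
  have h21 : P.toBlocks₁₂ᵀ = P.toBlocks₂₁ := by
    rw [← conjTranspose_eq_transpose_of_trivial]; exact (isHermitian_fromBlocks_iff.1 hP.1).2.1
  exact ⟨P.toBlocks₁₁, P.toBlocks₁₂, P.toBlocks₂₂, h21 ▸ hP, fun i j => hle (.inl i) (.inl j),
    fun i j => hle (.inl i) (.inr j), fun i j => hle (.inr i) (.inr j)⟩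

variable [DecidableEq ι]

lemma SPN.fromBlocks_of_schur {M : Matrix ι ι ℝ} {F : Matrix ι κ ℝ} {B : Matrix κ κ ℝ}
    (hM : M.PosDef) (h : SPN (B - Fᵀ * M⁻¹ * F)) : SPN (fromBlocks M F Fᵀ B) := by
  obtain ⟨Q, N, hQ, hN, hQN⟩ := h
  have := hM.isUnit.invertible
  have hX : (fromBlocks M F Fᵀ (Fᵀ * M⁻¹ * F + Q)).PosSemidef := by
    rw [← conjTranspose_eq_transpose_of_trivial, hM.fromBlocks₁₁, add_sub_cancel_left]
    exact hQ
  refine SPN.of_posSemidef_le hX ?_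
  rintro (i | i) (j | j)
  iterate 3 exact le_rfl
  have hB := congr_fun₂ hQN i j
  simp only [fromBlocks_apply₂₂, Matrix.add_apply, Matrix.sub_apply] at hB ⊢
  linarith [hN i j]

lemma SPN.schur_of_fromBlocks {M : Matrix ι ι ℝ} {F : Matrix ι κ ℝ} {B : Matrix κ κ ℝ}
    (hM : M.PosDef) (hMoff : ∀ i j, i ≠ j → M i j < 0) (hF : ∀ i j, F i j ≤ 0)
    (h : SPN (fromBlocks M F Fᵀ B)) : SPN (B - Fᵀ * M⁻¹ * F) := by
  obtain ⟨C, G, D, hX, hCM, hGF, hDB⟩ := h.exists_posSemidef_fromBlocks_le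
  have hC : C.PosSemidef := hX.submatrix Sum.inl
  have hCoff : ∀ i j, i ≠ j → C i j < 0 := fun i j hij => (hCM i j).trans_lt (hMoff i j hij)
  have hZM : M.IsZMatrix := fun i j hij => (hMoff i j hij).le
  by_cases hdet : C.det = 0
  · obtain ⟨y, hy, hCy⟩ := hC.exists_pos_mulVec_eq_zero hCoff hdet
    have hG : G = 0 := eq_zero_of_transpose_mulVec_eq_zero (fun i j => (hGF i j).trans (hF i j))
      hy (hX.transpose_mulVec_eq_zero_of_fromBlocks hCy)
    have hF0 : F = 0 := by
      ext i j
      exact le_antisymm (hF i j) (by simpa [hG] using hGF i j)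
    have hD : D.PosSemidef := hX.submatrix Sum.inr
    exact SPN.of_posSemidef_le hD fun i j => by simpa [hF0] using hDB i j
  · have hCpd : C.PosDef :=
      hC.posDef_iff_isUnit.2 ((isUnit_iff_isUnit_det C).2 (isUnit_iff_ne_zero.2 hdet))
    have := hCpd.isUnit.invertible
    have hZC : C.IsZMatrix := fun i j hij => (hCoff i j hij).le
    have hS : (D - Gᵀ * C⁻¹ * G).PosSemidef := by
      rw [← conjTranspose_eq_transpose_of_trivial] at hX ⊢
      exact (hCpd.fromBlocks₁₁ G D).1 hX
    have hMC : ∀ i j, M⁻¹ i j ≤ C⁻¹ i j :=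
      inv_apply_le_inv_apply_of_le (isUnit_iff_ne_zero.2 hdet)
        ((isUnit_iff_isUnit_det M).1 hM.isUnit) (hZC.inv_apply_nonneg hCpd)
        (hZM.inv_apply_nonneg hM) hCM
    refine SPN.of_posSemidef_le hS fun i j => ?_
    have hquad := transpose_mul_mul_apply_le hGF hF (hZM.inv_apply_nonneg hM) hMC i j
    simp only [Matrix.sub_apply]
    linarith [hDB i j]

end SPN

theorem stmt_6_general {r m : ℕ} (M : Matrix (Fin r) (Fin r) ℝ) (B : Matrix (Fin m) (Fin m) ℝ)
    (F : Matrix (Fin r) (Fin m) ℝ) (hM : M.IsSymm)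
    (hMinv : IsUnit M.det) (hMcop : Copositive M)
    (hMoff : ∀ i j : Fin r, i ≠ j → M i j < 0)
    (hF : ∀ i j, F i j ≤ 0) :
    SPN (Matrix.fromBlocks M F Fᵀ B) ↔ SPN (B - Fᵀ * M⁻¹ * F) := by
  have hZ : M.IsZMatrix := fun i j hij => (hMoff i j hij).le
  have hMpd : M.PosDef := (hZ.posSemidef_of_copositive hM hMcop).posDef_iff_isUnit.2
    ((isUnit_iff_isUnit_det M).2 hMinv)
  exact ⟨SPN.schur_of_fromBlocks hMpd hMoff hF, SPN.fromBlocks_of_schur hMpd⟩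

theorem stmt_6 {r m : ℕ} (M : Matrix (Fin r) (Fin r) ℝ) (B : Matrix (Fin m) (Fin m) ℝ)
    (F : Matrix (Fin r) (Fin m) ℝ) (hM : M.IsSymm) (hB : B.IsSymm)
    (hMinv : IsUnit M.det) (hMcop : Copositive M)
    (hMoff : ∀ i j : Fin r, i ≠ j → M i j < 0)
    (hF : ∀ i j, F i j ≤ 0) :
    SPN (Matrix.fromBlocks M F Fᵀ B) ↔ SPN (B - Fᵀ * M⁻¹ * F) :=
  stmt_6_general M B F hM hMinv hMcop hMoff hF
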